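/- Let (Y¹, Z¹) with drivers (f¹_n) and (Y², Z²) with drivers (f²_n) be two solutions of the generic discrete scheme whose driver differences satisfy the driver-difference assumption with parameters k_y ∈ ℝ, L_f ≥ 0, L_v ≥ 0 and nonnegative reals (ε_n)_{0≤n<N}. Let λ > 0 satisfy λ ≥ L_f, 2k_y + λ ≥ 0 and h·(2k_y + λ) < 1, and set A := (1 − h·(2k_y + λ))⁻¹. Then for every 0 ≤ n ≤ N, E[(δY_n)²] ≤ A^N·E[(δY_N)²] + N·h·L_v·λ⁻¹·A^N·max_{0≤k<N} ε_k. -/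

import Mathlib

/-!
Subtracting the two solutions gives a solution of the same linear scheme with driver `δf`.
With `E' := E[δY_{n+1} | 𝒢_n] = δY_n - h δf_n`, Pythagoras splits `E[δY_{n+1}²]` into
`E[E'²] + E[(δY_{n+1} - E')²]`, and the second term dominates `h E[|δZ_n|²]` by a conditional
Bessel inequality for the conditionally orthogonal increments `ΔW_nⁱ`. Expanding `E[E'²]`, the
one-sided bound on `φ_n` and Young's inequality `2 ψ δY ≤ λ δY² + λ⁻¹ ψ²` (where `λ ≥ L_f` lets
the Bessel term absorb the `δZ` part of `ψ`) give
`(1 - h (2 k_y + λ)) E[δY_n²] ≤ E[δY_{n+1}²] + h L_v λ⁻¹ ε_n`, and a backward discrete Grönwall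
argument concludes.
-/

open MeasureTheory Finset

noncomputable section

/-- The Brownian-type increments `ΔW_n : Ω → ℝ^d` are `𝒢_{n+1}`-measurable, have
square-integrable components, conditional mean zero and conditional covariance `h·I`. -/
def IncrementsOK {Ω : Type} [MeasurableSpace Ω] (P : Measure Ω) (N d : ℕ) (h : ℝ)
    (𝒢 : Filtration ℕ (inferInstance : MeasurableSpace Ω))
    (ΔW : ℕ → Ω → Fin d → ℝ) : Prop :=
  ∀ n < N,
    (∀ i, StronglyMeasurable[𝒢 (n + 1)] (fun ω => ΔW n ω i)) ∧
    (∀ i, MemLp (fun ω => ΔW n ω i) 2 P) ∧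
    (∀ i, P[(fun ω => ΔW n ω i) | 𝒢 n] =ᵐ[P] 0) ∧
    (∀ i j, P[(fun ω => ΔW n ω i * ΔW n ω j) | 𝒢 n]
        =ᵐ[P] fun _ => if i = j then h else 0)

/-- `(Y, Z)` solves the generic discrete scheme with driver terms `f`:
each `Y_n` is square-integrable and `𝒢_n`-measurable, each `f_n` is square-integrable and
`𝒢_n`-measurable, and almost surely `Y_n = E[Y_{n+1} | 𝒢_n] + h·f_n` and
`Z_nⁱ = h⁻¹·E[Y_{n+1}·ΔW_nⁱ | 𝒢_n]` for all `n < N`. -/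
def SolvesScheme {Ω : Type} [MeasurableSpace Ω] (P : Measure Ω) (N d : ℕ) (h : ℝ)
    (𝒢 : Filtration ℕ (inferInstance : MeasurableSpace Ω))
    (ΔW : ℕ → Ω → Fin d → ℝ)
    (Y : ℕ → Ω → ℝ) (Z : ℕ → Ω → Fin d → ℝ) (f : ℕ → Ω → ℝ) : Prop :=
  (∀ n ≤ N, MemLp (Y n) 2 P) ∧
  (∀ n ≤ N, StronglyMeasurable[𝒢 n] (Y n)) ∧
  (∀ n < N, MemLp (f n) 2 P) ∧
  (∀ n < N, StronglyMeasurable[𝒢 n] (f n)) ∧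
  (∀ n < N, Y n =ᵐ[P] fun ω => (P[Y (n + 1) | 𝒢 n]) ω + h * f n ω) ∧
  (∀ n < N, ∀ i, (fun ω => Z n ω i)
      =ᵐ[P] fun ω => h⁻¹ * (P[(fun ω' => Y (n + 1) ω' * ΔW n ω' i) | 𝒢 n]) ω)

/-- The driver-difference assumption with parameters `k_y, L_f, L_v` and nonnegative
reals `ε_n`: for each `n < N` the difference of the drivers splits as `φ_n + ψ_n` with
`E[φ_n·δY_n] ≤ k_y·E[(δY_n)²]` and `E[ψ_n²] ≤ L_v·ε_n + L_f·E[|δZ_n|²]`. -/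
def DriverDiff {Ω : Type} [MeasurableSpace Ω] (P : Measure Ω) (N d : ℕ)
    (𝒢 : Filtration ℕ (inferInstance : MeasurableSpace Ω))
    (k_y L_f L_v : ℝ) (ε : ℕ → ℝ)
    (Y1 Y2 : ℕ → Ω → ℝ) (Z1 Z2 : ℕ → Ω → Fin d → ℝ) (f1 f2 : ℕ → Ω → ℝ) : Prop :=
  ∀ n < N, ∃ φ ψ : Ω → ℝ,
    StronglyMeasurable[𝒢 n] φ ∧ StronglyMeasurable[𝒢 n] ψ ∧
    MemLp φ 2 P ∧ MemLp ψ 2 P ∧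
    (fun ω => f1 n ω - f2 n ω) =ᵐ[P] (fun ω => φ ω + ψ ω) ∧
    (∫ ω, φ ω * (Y1 n ω - Y2 n ω) ∂P) ≤ k_y * ∫ ω, (Y1 n ω - Y2 n ω) ^ 2 ∂P ∧
    (∫ ω, (ψ ω) ^ 2 ∂P)
      ≤ L_v * ε n + L_f * ∫ ω, (∑ i, (Z1 n ω i - Z2 n ω i) ^ 2) ∂P


section L2

variable {Ω : Type*} {m m₀ : MeasurableSpace Ω} {μ : Measure Ω}

theorem integral_sub_sq {f g : Ω → ℝ} (hf : MemLp f 2 μ) (hg : MemLp g 2 μ) :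
    ∫ ω, (f ω - g ω) ^ 2 ∂μ
      = ∫ ω, f ω ^ 2 ∂μ - 2 * ∫ ω, f ω * g ω ∂μ + ∫ ω, g ω ^ 2 ∂μ := by
  have hfg : Integrable (fun ω => 2 * (f ω * g ω)) μ := (hf.integrable_mul hg).const_mul 2
  have hf2 : Integrable (fun ω => f ω ^ 2 - 2 * (f ω * g ω)) μ := hf.integrable_sq.sub hfg
  calc ∫ ω, (f ω - g ω) ^ 2 ∂μ = ∫ ω, (f ω ^ 2 - 2 * (f ω * g ω)) + g ω ^ 2 ∂μ := by
        congr 1; funext ω; ring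
    _ = _ := by
        rw [integral_add hf2 hg.integrable_sq,
          integral_sub hf.integrable_sq hfg, integral_const_mul]

theorem two_mul_integral_mul_le {f g : Ω → ℝ} (hf : MemLp f 2 μ) (hg : MemLp g 2 μ)
    {c : ℝ} (hc : 0 < c) :
    2 * ∫ ω, f ω * g ω ∂μ ≤ c * ∫ ω, g ω ^ 2 ∂μ + c⁻¹ * ∫ ω, f ω ^ 2 ∂μ := by
  have hpt : ∀ ω, 2 * (f ω * g ω) ≤ c * g ω ^ 2 + c⁻¹ * f ω ^ 2 := fun ω => by
    have := sq_nonneg (c * g ω - f ω)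
    have hcc : c * c⁻¹ = 1 := mul_inv_cancel₀ hc.ne'
    nlinarith [inv_pos.2 hc]
  rw [← integral_const_mul, ← integral_const_mul, ← integral_const_mul,
    ← integral_add (hg.integrable_sq.const_mul c) (hf.integrable_sq.const_mul c⁻¹)]
  exact integral_mono ((hf.integrable_mul hg).const_mul 2)
    ((hg.integrable_sq.const_mul c).add (hf.integrable_sq.const_mul c⁻¹)) hpt

theorem integral_mul_condExp_of_stronglyMeasurable (hm : m ≤ m₀) [SigmaFinite (μ.trim hm)]
    {T g : Ω → ℝ} (hT : StronglyMeasurable[m] T) (hTg : Integrable (fun ω => T ω * g ω) μ)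
    (hg : Integrable g μ) :
    ∫ ω, T ω * g ω ∂μ = ∫ ω, T ω * μ[g|m] ω ∂μ := by
  rw [← integral_condExp hm]
  exact integral_congr_ae (condExp_mul_of_stronglyMeasurable_left hT hTg hg)

theorem integral_sq_eq_integral_sq_condExp_add [IsFiniteMeasure μ] (hm : m ≤ m₀)
    {Y : Ω → ℝ} (hY : MemLp Y 2 μ) :
    ∫ ω, Y ω ^ 2 ∂μ = ∫ ω, μ[Y|m] ω ^ 2 ∂μ + ∫ ω, (Y ω - μ[Y|m] ω) ^ 2 ∂μ := by
  have hE : MemLp (μ[Y|m]) 2 μ := hY.condExp one_le_two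
  have hEY : ∫ ω, μ[Y|m] ω * Y ω ∂μ = ∫ ω, μ[Y|m] ω ^ 2 ∂μ := by
    rw [integral_mul_condExp_of_stronglyMeasurable hm stronglyMeasurable_condExp
      (hE.integrable_mul hY) (hY.integrable one_le_two)]
    simp only [sq]
  rw [integral_sub_sq hY hE]
  simp_rw [mul_comm (Y _)]
  rw [hEY]
  ring

end L2

theorem integral_le_of_forall_setIntegral_sublevel_le {α : Type*} [MeasurableSpace α]
    {μ : Measure α} [IsFiniteMeasure μ] {f : α → ℝ} (hf : Measurable f) (hf0 : 0 ≤ f) {C : ℝ}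
    (hC : ∀ K : ℕ, ∫ x in {x | f x ≤ K}, f x ∂μ ≤ C) :
    ∫ x, f x ∂μ ≤ C := by
  have hS : ∀ K : ℕ, MeasurableSet {x | f x ≤ K} := fun K => measurableSet_le hf measurable_const
  have hC0 : 0 ≤ C := (setIntegral_nonneg (hS 0) fun x _ => hf0 x).trans (hC 0)
  have hint : ∀ K : ℕ, IntegrableOn f {x | f x ≤ K} μ := fun K =>
    IntegrableOn.of_bound (measure_lt_top _ _) hf.aestronglyMeasurable K <|
      (ae_restrict_iff' (hS K)).2 <| ae_of_all _ fun x hx => by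
        rwa [Real.norm_of_nonneg (hf0 x)]
  have hunion : ⋃ K : ℕ, {x | f x ≤ K} = Set.univ :=
    Set.iUnion_eq_univ_iff.2 fun x => exists_nat_ge (f x)
  have hmono : Monotone fun K : ℕ => {x | f x ≤ K} := fun K L hKL =>
    Set.ofPred_subset_ofPred.2 fun x hx => le_trans hx (Nat.cast_le.2 hKL)
  have hlin : ∫⁻ x, ENNReal.ofReal (f x) ∂μ ≤ ENNReal.ofReal C := by
    rw [← setLIntegral_univ, ← hunion, setLIntegral_iUnion_of_directed _ hmono.directed_le]
    refine iSup_le fun K => ?_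
    rw [← ofReal_integral_eq_lintegral_ofReal (hint K) (ae_of_all _ fun x => hf0 x)]
    exact ENNReal.ofReal_le_ofReal (hC K)
  rw [integral_eq_lintegral_of_nonneg_ae (ae_of_all _ hf0) hf.aestronglyMeasurable]
  exact ENNReal.toReal_le_of_le_ofReal hC0 hlin

section Bessel

variable {Ω : Type*} {m m₀ : MeasurableSpace Ω} {μ : Measure Ω} [IsFiniteMeasure μ]
  {d : ℕ} {h : ℝ} {W : Ω → Fin d → ℝ}

theorem integral_mul_sum_mul_eq (hm : m ≤ m₀) (hW : ∀ i, MemLp (fun ω => W ω i) 2 μ)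
    {M : Ω → ℝ} (hM : MemLp M 2 μ) {T : Fin d → Ω → ℝ} (hT : ∀ i, StronglyMeasurable[m] (T i))
    {c : ℝ} (hTc : ∀ i ω, ‖T i ω‖ ≤ c) :
    ∫ ω, M ω * ∑ i, T i ω * W ω i ∂μ
      = ∑ i, ∫ ω, T i ω * μ[fun ω => M ω * W ω i|m] ω ∂μ := by
  have hint : ∀ i, Integrable (fun ω => T i ω * (M ω * W ω i)) μ := fun i =>
    (hM.integrable_mul (hW i)).bdd_mul ((hT i).mono hm).aestronglyMeasurable
      (ae_of_all _ (hTc i))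
  simp only [mul_sum, mul_left_comm (M _)]
  rw [integral_finsetSum _ fun i _ => hint i]
  exact sum_congr rfl fun i _ => integral_mul_condExp_of_stronglyMeasurable hm (hT i) (hint i)
    (hM.integrable_mul (hW i))

theorem integral_sum_mul_sq_eq (hm : m ≤ m₀) (hW : ∀ i, MemLp (fun ω => W ω i) 2 μ)
    (hWW : ∀ i j, μ[fun ω => W ω i * W ω j|m] =ᵐ[μ] fun _ => if i = j then h else 0)
    {T : Fin d → Ω → ℝ} (hT : ∀ i, StronglyMeasurable[m] (T i)) {c : ℝ}
    (hTc : ∀ i ω, ‖T i ω‖ ≤ c) :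
    ∫ ω, (∑ i, T i ω * W ω i) ^ 2 ∂μ = h * ∑ i, ∫ ω, T i ω ^ 2 ∂μ := by
  have hTT : ∀ i j, StronglyMeasurable[m] (fun ω => T i ω * T j ω) := fun i j =>
    (hT i).mul (hT j)
  have hint : ∀ i j, Integrable (fun ω => (T i ω * T j ω) * (W ω i * W ω j)) μ :=
    fun i j => ((hW i).integrable_mul (hW j)).bdd_mul ((hTT i j).mono hm).aestronglyMeasurable
      (ae_of_all _ fun ω => by
        rw [norm_mul]
        exact mul_le_mul (hTc i ω) (hTc j ω) (norm_nonneg _) ((norm_nonneg _).trans (hTc i ω)))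
  have hterm : ∀ i j, ∫ ω, (T i ω * T j ω) * (W ω i * W ω j) ∂μ
      = if i = j then h * ∫ ω, T i ω ^ 2 ∂μ else 0 := by
    intro i j
    rw [integral_mul_condExp_of_stronglyMeasurable hm (hTT i j) (hint i j)
      ((hW i).integrable_mul (hW j)), integral_congr_ae ((hWW i j).mono fun ω hω => by
        rw [hω])]
    split_ifs with hij
    · subst hij; rw [← integral_const_mul]; congr 1; funext ω; ring
    · simp
  calc ∫ ω, (∑ i, T i ω * W ω i) ^ 2 ∂μ
      = ∫ ω, ∑ i, ∑ j, (T i ω * T j ω) * (W ω i * W ω j) ∂μ := by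
        congr 1; funext ω
        simp only [sq, sum_mul_sum]
        exact sum_congr rfl fun i _ => sum_congr rfl fun j _ => by ring
    _ = h * ∑ i, ∫ ω, T i ω ^ 2 ∂μ := by
        rw [integral_finsetSum _ fun i _ => integrable_finsetSum _ fun j _ => hint i j, mul_sum]
        refine sum_congr rfl fun i _ => ?_
        rw [integral_finsetSum _ fun j _ => hint i j]
        simp only [hterm, sum_ite_eq, mem_univ, if_true]

theorem two_mul_sum_integral_mul_condExp_sub_le (hm : m ≤ m₀) (hh : 0 < h)
    (hW : ∀ i, MemLp (fun ω => W ω i) 2 μ)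
    (hWW : ∀ i j, μ[fun ω => W ω i * W ω j|m] =ᵐ[μ] fun _ => if i = j then h else 0)
    {M : Ω → ℝ} (hM : MemLp M 2 μ) {T : Fin d → Ω → ℝ} (hT : ∀ i, StronglyMeasurable[m] (T i))
    {c : ℝ} (hTc : ∀ i ω, ‖T i ω‖ ≤ c) :
    2 * ∑ i, ∫ ω, T i ω * μ[fun ω => M ω * W ω i|m] ω ∂μ - ∑ i, ∫ ω, T i ω ^ 2 ∂μ
      ≤ h * ∫ ω, M ω ^ 2 ∂μ := by
  have hTW : ∀ i, MemLp (fun ω => T i ω * W ω i) 2 μ := fun i =>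
    (hW i).mul' (memLp_top_of_bound ((hT i).mono hm).aestronglyMeasurable c (ae_of_all _ (hTc i)))
  have hnn : 0 ≤ ∫ ω, (h * M ω - ∑ i, T i ω * W ω i) ^ 2 ∂μ :=
    integral_nonneg fun ω => sq_nonneg _
  rw [integral_sub_sq (hM.const_mul h) (memLp_finsetSum _ fun i _ => hTW i)] at hnn
  simp only [mul_pow, mul_assoc, integral_const_mul] at hnn
  rw [integral_mul_sum_mul_eq hm hW hM hT hTc, integral_sum_mul_sq_eq hm hW hWW hT hTc] at hnn
  refine le_of_mul_le_mul_left ?_ hh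
  linarith

theorem integral_sum_sq_condExp_mul_le (hm : m ≤ m₀) (hh : 0 < h)
    (hW : ∀ i, MemLp (fun ω => W ω i) 2 μ)
    (hWW : ∀ i j, μ[fun ω => W ω i * W ω j|m] =ᵐ[μ] fun _ => if i = j then h else 0)
    {M : Ω → ℝ} (hM : MemLp M 2 μ) :
    ∫ ω, ∑ i, μ[fun ω => M ω * W ω i|m] ω ^ 2 ∂μ ≤ h * ∫ ω, M ω ^ 2 ∂μ := by
  -- `c i` is not yet known to be square integrable, so `∑ i, c i * W i` may not be either:
  -- apply the bounded case to the truncations of `c` to the events `{∑ i, c i ^ 2 ≤ K}`.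
  set c : Fin d → Ω → ℝ := fun i => μ[fun ω => M ω * W ω i|m]
  set S : Ω → ℝ := fun ω => ∑ i, c i ω ^ 2
  have hS : StronglyMeasurable[m] S :=
    Finset.stronglyMeasurable_fun_sum _ fun i _ => stronglyMeasurable_condExp.pow 2
  refine integral_le_of_forall_setIntegral_sublevel_le (hS.mono hm).measurable
    (fun ω => sum_nonneg fun i _ => sq_nonneg _) fun K => ?_
  set B := {ω | S ω ≤ K}
  have hB : MeasurableSet[m] B := measurableSet_le hS.measurable measurable_const
  have hT : ∀ i, StronglyMeasurable[m] (B.indicator (c i)) := fun i =>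
    stronglyMeasurable_condExp.indicator hB
  have hTc : ∀ i ω, ‖B.indicator (c i) ω‖ ≤ √K := fun i ω => by
    rw [Real.norm_eq_abs]
    refine Real.abs_le_sqrt ?_
    by_cases hω : ω ∈ B
    · rw [Set.indicator_of_mem hω]
      exact (single_le_sum (fun j _ => sq_nonneg (c j ω)) (mem_univ i)).trans hω
    · rw [Set.indicator_of_notMem hω, sq, zero_mul]
      exact Nat.cast_nonneg K
  have hTsq : ∀ i ω, B.indicator (c i) ω * c i ω = B.indicator (c i) ω ^ 2 := fun i ω => by
    by_cases hω : ω ∈ B <;> simp [hω, sq]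
  have hsum : ∑ i, ∫ ω, B.indicator (c i) ω ^ 2 ∂μ = ∫ ω in B, S ω ∂μ := by
    rw [← integral_indicator (hm _ hB), ← integral_finsetSum]
    · congr 1; funext ω
      by_cases hω : ω ∈ B <;> simp [hω, S]
    · exact fun i _ => (MemLp.of_bound ((hT i).mono hm).aestronglyMeasurable _
        (ae_of_all _ (hTc i)) (p := 2)).integrable_sq
  have hbounded := two_mul_sum_integral_mul_condExp_sub_le hm hh hW hWW hM hT hTc
  change 2 * ∑ i, ∫ ω, B.indicator (c i) ω * c i ω ∂μ - _ ≤ _ at hbounded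
  simp only [hTsq, hsum] at hbounded
  linarith

theorem integral_sum_sq_condExp_mul_le_integral_sq_sub_condExp (hm : m ≤ m₀) (hh : 0 < h)
    (hW : ∀ i, MemLp (fun ω => W ω i) 2 μ) (hW0 : ∀ i, μ[fun ω => W ω i|m] =ᵐ[μ] 0)
    (hWW : ∀ i j, μ[fun ω => W ω i * W ω j|m] =ᵐ[μ] fun _ => if i = j then h else 0)
    {Y : Ω → ℝ} (hY : MemLp Y 2 μ) :
    ∫ ω, ∑ i, μ[fun ω => Y ω * W ω i|m] ω ^ 2 ∂μ
      ≤ h * ∫ ω, (Y ω - μ[Y|m] ω) ^ 2 ∂μ := by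
  have hE : MemLp (μ[Y|m]) 2 μ := hY.condExp one_le_two
  have hcond : ∀ i, μ[fun ω => Y ω * W ω i|m]
      =ᵐ[μ] μ[fun ω => (Y ω - μ[Y|m] ω) * W ω i|m] := fun i => by
    have hsplit : (fun ω => (Y ω - μ[Y|m] ω) * W ω i)
        = (fun ω => Y ω * W ω i) - fun ω => μ[Y|m] ω * W ω i := by
      funext ω; simp only [Pi.sub_apply]; ring
    have hYW : Integrable (fun ω => Y ω * W ω i) μ := hY.integrable_mul (hW i)
    have hEW : Integrable (fun ω => μ[Y|m] ω * W ω i) μ := hE.integrable_mul (hW i)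
    have hpull : μ[fun ω => μ[Y|m] ω * W ω i|m]
        =ᵐ[μ] fun ω => μ[Y|m] ω * μ[fun ω => W ω i|m] ω :=
      condExp_mul_of_stronglyMeasurable_left stronglyMeasurable_condExp hEW
        ((hW i).integrable one_le_two)
    filter_upwards [condExp_sub (m := m) hYW hEW, hpull, hW0 i] with ω hsub hpull hzero
    rw [hsplit, hsub, Pi.sub_apply, hpull, hzero, Pi.zero_apply, mul_zero, sub_zero]
  calc ∫ ω, ∑ i, μ[fun ω => Y ω * W ω i|m] ω ^ 2 ∂μ
      = ∫ ω, ∑ i, μ[fun ω => (Y ω - μ[Y|m] ω) * W ω i|m] ω ^ 2 ∂μ := by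
        refine integral_congr_ae ?_
        filter_upwards [ae_all_iff.2 hcond] with ω hω
        simp only [hω]
    _ ≤ h * ∫ ω, (Y ω - μ[Y|m] ω) ^ 2 ∂μ :=
        integral_sum_sq_condExp_mul_le hm hh hW hWW (hY.sub hE)

end Bessel

theorem discrete_gronwall_backward {u : ℕ → ℝ} {N : ℕ} {A B : ℝ} (hA : 1 ≤ A) (hB : 0 ≤ B)
    (huN : 0 ≤ u N) (hu : ∀ k < N, u k ≤ A * (u (k + 1) + B)) :
    ∀ n ≤ N, u n ≤ A ^ N * u N + N * A ^ N * B := by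
  have hA0 : 0 ≤ A := zero_le_one.trans hA
  have hback : ∀ j ≤ N, u (N - j) ≤ A ^ j * (u N + j * B) := by
    intro j
    induction j with
    | zero => simp
    | succ j ih =>
      intro hj
      have hstep : u (N - (j + 1)) ≤ A * (u (N - j) + B) := by
        have := hu (N - (j + 1)) (by omega)
        rwa [show N - (j + 1) + 1 = N - j by omega] at this
      have hAB : A * B ≤ A * (A ^ j * B) :=
        mul_le_mul_of_nonneg_left (le_mul_of_one_le_left hB (one_le_pow₀ hA)) hA0
      calc u (N - (j + 1)) ≤ A * (A ^ j * (u N + j * B) + B) := by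
            refine hstep.trans (mul_le_mul_of_nonneg_left ?_ hA0)
            linarith [ih (by omega)]
        _ ≤ A ^ (j + 1) * (u N + (j + 1 : ℕ) * B) := by
            push_cast
            linear_combination hAB
  intro n hn
  have hsub : (↑(N - n) : ℝ) ≤ N := Nat.cast_le.2 (Nat.sub_le N n)
  calc u n = u (N - (N - n)) := by rw [Nat.sub_sub_self hn]
    _ ≤ A ^ (N - n) * (u N + ↑(N - n) * B) := hback (N - n) (Nat.sub_le N n)
    _ ≤ A ^ N * (u N + N * B) := by
        gcongr
        exact Nat.sub_le N n
    _ = A ^ N * u N + N * A ^ N * B := by ring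

section Scheme

variable {Ω : Type} [MeasurableSpace Ω] {P : Measure Ω} [IsFiniteMeasure P] {N d : ℕ} {h : ℝ}
  {𝒢 : Filtration ℕ (inferInstance : MeasurableSpace Ω)} {ΔW : ℕ → Ω → Fin d → ℝ}

theorem SolvesScheme.sub (hInc : IncrementsOK P N d h 𝒢 ΔW) {Y1 Y2 : ℕ → Ω → ℝ}
    {Z1 Z2 : ℕ → Ω → Fin d → ℝ} {f1 f2 : ℕ → Ω → ℝ}
    (hSol1 : SolvesScheme P N d h 𝒢 ΔW Y1 Z1 f1) (hSol2 : SolvesScheme P N d h 𝒢 ΔW Y2 Z2 f2) :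
    SolvesScheme P N d h 𝒢 ΔW (Y1 - Y2) (Z1 - Z2) (f1 - f2) := by
  obtain ⟨hY1, hY1m, hf1, hf1m, hY1e, hZ1e⟩ := hSol1
  obtain ⟨hY2, hY2m, hf2, hf2m, hY2e, hZ2e⟩ := hSol2
  refine ⟨fun n hn => (hY1 n hn).sub (hY2 n hn), fun n hn => (hY1m n hn).sub (hY2m n hn),
    fun n hn => (hf1 n hn).sub (hf2 n hn), fun n hn => (hf1m n hn).sub (hf2m n hn),
    fun n hn => ?_, fun n hn i => ?_⟩
  · filter_upwards [hY1e n hn, hY2e n hn, condExp_sub (m := 𝒢 n)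
      ((hY1 _ hn).integrable one_le_two) ((hY2 _ hn).integrable one_le_two)] with ω hω1 hω2 hsub
    simp only [Pi.sub_apply] at hsub ⊢
    rw [hω1, hω2, hsub]
    ring
  · have hW := (hInc n hn).2.1 i
    have hYW1 : Integrable (fun ω => Y1 (n + 1) ω * ΔW n ω i) P :=
      (hY1 _ hn).integrable_mul hW
    have hYW2 : Integrable (fun ω => Y2 (n + 1) ω * ΔW n ω i) P :=
      (hY2 _ hn).integrable_mul hW
    have hsplit : (fun ω => (Y1 - Y2) (n + 1) ω * ΔW n ω i)
        = (fun ω => Y1 (n + 1) ω * ΔW n ω i) - fun ω => Y2 (n + 1) ω * ΔW n ω i := by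
      funext ω; simp only [Pi.sub_apply]; ring
    filter_upwards [hZ1e n hn i, hZ2e n hn i, condExp_sub (m := 𝒢 n) hYW1 hYW2] with ω hω1 hω2 hsub
    rw [hsplit, hsub]
    simp only [Pi.sub_apply]
    rw [hω1, hω2]
    ring

theorem SolvesScheme.mul_integral_sum_sq_le (hh : 0 < h) (hInc : IncrementsOK P N d h 𝒢 ΔW)
    {Y : ℕ → Ω → ℝ} {Z : ℕ → Ω → Fin d → ℝ} {f : ℕ → Ω → ℝ}
    (hSol : SolvesScheme P N d h 𝒢 ΔW Y Z f) {n : ℕ} (hn : n < N) :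
    h * ∫ ω, ∑ i, Z n ω i ^ 2 ∂P
      ≤ ∫ ω, (Y (n + 1) ω - P[Y (n + 1)|𝒢 n] ω) ^ 2 ∂P := by
  obtain ⟨-, hW, hW0, hWW⟩ := hInc n hn
  have hbessel := integral_sum_sq_condExp_mul_le_integral_sq_sub_condExp (𝒢.le n) hh hW hW0 hWW
    (hSol.1 _ hn)
  have hZ : ∫ ω, ∑ i, Z n ω i ^ 2 ∂P
      = (h⁻¹) ^ 2 * ∫ ω, ∑ i, P[fun ω => Y (n + 1) ω * ΔW n ω i|𝒢 n] ω ^ 2 ∂P := by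
    rw [← integral_const_mul]
    refine integral_congr_ae ?_
    filter_upwards [ae_all_iff.2 (hSol.2.2.2.2.2 n hn)] with ω hω
    simp only [hω, mul_sum, mul_pow]
  rw [hZ, ← mul_assoc, sq, ← mul_assoc, mul_inv_cancel₀ hh.ne', one_mul]
  rw [inv_mul_le_iff₀ hh]
  exact hbessel

theorem SolvesScheme.integral_sq_le_succ (hh : 0 < h) (hInc : IncrementsOK P N d h 𝒢 ΔW)
    {Y : ℕ → Ω → ℝ} {Z : ℕ → Ω → Fin d → ℝ} {f : ℕ → Ω → ℝ}
    (hSol : SolvesScheme P N d h 𝒢 ΔW Y Z f) {n : ℕ} (hn : n < N) {φ ψ : Ω → ℝ}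
    (hφ : MemLp φ 2 P) (hψ : MemLp ψ 2 P) (hf : f n =ᵐ[P] fun ω => φ ω + ψ ω)
    {k_y L_f L_v e lam : ℝ} (hlam : 0 < lam) (hlamLf : L_f ≤ lam)
    (hφY : ∫ ω, φ ω * Y n ω ∂P ≤ k_y * ∫ ω, Y n ω ^ 2 ∂P)
    (hψZ : ∫ ω, ψ ω ^ 2 ∂P ≤ L_v * e + L_f * ∫ ω, ∑ i, Z n ω i ^ 2 ∂P) :
    (1 - h * (2 * k_y + lam)) * ∫ ω, Y n ω ^ 2 ∂P
      ≤ ∫ ω, Y (n + 1) ω ^ 2 ∂P + h * L_v * lam⁻¹ * e := by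
  have hYn : MemLp (Y n) 2 P := hSol.1 n hn.le
  have hfn : MemLp (f n) 2 P := hSol.2.2.1 n hn
  have hpyth := integral_sq_eq_integral_sq_condExp_add (𝒢.le n) (hSol.1 _ hn)
  have hZ := hSol.mul_integral_sum_sq_le hh hInc hn
  have hE : ∫ ω, P[Y (n + 1)|𝒢 n] ω ^ 2 ∂P
      = ∫ ω, Y n ω ^ 2 ∂P - 2 * ∫ ω, Y n ω * (h * f n ω) ∂P + ∫ ω, (h * f n ω) ^ 2 ∂P := by
    rw [← integral_sub_sq hYn (hfn.const_mul h)]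
    refine integral_congr_ae ?_
    filter_upwards [hSol.2.2.2.2.1 n hn] with ω hω
    rw [hω]
    ring
  have hsplit : ∫ ω, Y n ω * (h * f n ω) ∂P
      = h * ∫ ω, φ ω * Y n ω ∂P + h * ∫ ω, ψ ω * Y n ω ∂P := by
    have hφY' : Integrable (fun ω => h * (φ ω * Y n ω)) P := (hφ.integrable_mul hYn).const_mul h
    have hψY' : Integrable (fun ω => h * (ψ ω * Y n ω)) P := (hψ.integrable_mul hYn).const_mul h
    rw [← integral_const_mul, ← integral_const_mul, ← integral_add hφY' hψY']
    refine integral_congr_ae ?_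
    filter_upwards [hf] with ω hω
    rw [hω]
    ring
  have hyoung := two_mul_integral_mul_le hψ hYn hlam
  have hF : 0 ≤ ∫ ω, (h * f n ω) ^ 2 ∂P := integral_nonneg fun ω => sq_nonneg _
  have hZ0 : 0 ≤ ∫ ω, ∑ i, Z n ω i ^ 2 ∂P :=
    integral_nonneg fun ω => sum_nonneg fun i _ => sq_nonneg _
  have hLf : lam⁻¹ * L_f ≤ 1 := (inv_mul_le_one₀ hlam).2 hlamLf
  have hφY' := mul_le_mul_of_nonneg_left hφY hh.le
  have hyoung' := mul_le_mul_of_nonneg_left hyoung hh.le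
  have hψZ' := mul_le_mul_of_nonneg_left hψZ (mul_nonneg hh.le (inv_nonneg.2 hlam.le))
  have hLfZ := mul_le_mul_of_nonneg_right hLf (mul_nonneg hh.le hZ0)
  linarith

end Scheme

theorem deltaY_bound_discrete_scheme_general
    {Ω : Type} [MeasurableSpace Ω] (P : Measure Ω) [IsProbabilityMeasure P]
    (N : ℕ) (hN : 1 ≤ N) (h : ℝ) (hh : 0 < h) (d : ℕ)
    (𝒢 : Filtration ℕ (inferInstance : MeasurableSpace Ω))
    (ΔW : ℕ → Ω → Fin d → ℝ)
    (Y1 Y2 : ℕ → Ω → ℝ) (Z1 Z2 : ℕ → Ω → Fin d → ℝ) (f1 f2 : ℕ → Ω → ℝ)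
    (k_y L_f L_v : ℝ) (hLv : 0 ≤ L_v) (ε : ℕ → ℝ)
    (hε : ∀ n < N, 0 ≤ ε n)
    (hInc : IncrementsOK P N d h 𝒢 ΔW)
    (hSol1 : SolvesScheme P N d h 𝒢 ΔW Y1 Z1 f1)
    (hSol2 : SolvesScheme P N d h 𝒢 ΔW Y2 Z2 f2)
    (hDrv : DriverDiff P N d 𝒢 k_y L_f L_v ε Y1 Y2 Z1 Z2 f1 f2)
    (lam : ℝ) (hlam : 0 < lam) (hlamLf : L_f ≤ lam) (hlamky : 0 ≤ 2 * k_y + lam)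
    (hsmall : h * (2 * k_y + lam) < 1)
    (A : ℝ) (hA : A = (1 - h * (2 * k_y + lam))⁻¹) :
    ∀ n ≤ N,
      (∫ ω, (Y1 n ω - Y2 n ω) ^ 2 ∂P)
        ≤ A ^ N * (∫ ω, (Y1 N ω - Y2 N ω) ^ 2 ∂P)
          + N * h * L_v * lam⁻¹ * A ^ N
            * (Finset.range N).sup'
                (nonempty_range_iff.mpr (Nat.one_le_iff_ne_zero.mp hN)) ε := by
  set εmax := (range N).sup' (nonempty_range_iff.mpr (Nat.one_le_iff_ne_zero.mp hN)) ε
  have hεmax : ∀ k < N, ε k ≤ εmax := fun k hk => le_sup' ε (mem_range.2 hk)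
  have hc : 0 < 1 - h * (2 * k_y + lam) := by linarith
  have hA1 : 1 ≤ A := hA ▸ (one_le_inv₀ hc).2 (sub_le_self _ (mul_nonneg hh.le hlamky))
  have hδ := hSol1.sub hInc hSol2
  intro n hn
  refine (discrete_gronwall_backward (u := fun k => ∫ ω, (Y1 k ω - Y2 k ω) ^ 2 ∂P) hA1
    (B := h * L_v * lam⁻¹ * εmax)
    (mul_nonneg (by positivity) ((hε 0 hN).trans (hεmax 0 hN)))
    (integral_nonneg fun ω => sq_nonneg _) (fun k hk => ?_) n hn).trans_eq (by ring)
  obtain ⟨φ, ψ, -, -, hφ, hψ, hf, hφY, hψZ⟩ := hDrv k hk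
  have hstep : (1 - h * (2 * k_y + lam)) * ∫ ω, (Y1 k ω - Y2 k ω) ^ 2 ∂P
      ≤ ∫ ω, (Y1 (k + 1) ω - Y2 (k + 1) ω) ^ 2 ∂P + h * L_v * lam⁻¹ * ε k :=
    hδ.integral_sq_le_succ hh hInc hk hφ hψ hf hlam hlamLf hφY hψZ
  have hεk : h * L_v * lam⁻¹ * ε k ≤ h * L_v * lam⁻¹ * εmax :=
    mul_le_mul_of_nonneg_left (hεmax k hk) (by positivity)
  rw [hA, le_inv_mul_iff₀ hc]
  linarith

/-- Discrete Grönwall bound for `E[(δY_n)²]`: if `λ ≥ L_f`,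
`2k_y + λ ≥ 0` and `h·(2k_y + λ) < 1`, then with `A = (1 − h·(2k_y + λ))⁻¹`, for every
`n ≤ N`, `E[(δY_n)²] ≤ A^N·E[(δY_N)²] + N·h·L_v·λ⁻¹·A^N·max_{k<N} ε_k`. -/
theorem deltaY_bound_discrete_scheme
    {Ω : Type} [MeasurableSpace Ω] (P : Measure Ω) [IsProbabilityMeasure P]
    (N : ℕ) (hN : 1 ≤ N) (h : ℝ) (hh : 0 < h) (d : ℕ) (hd : 1 ≤ d)
    (𝒢 : Filtration ℕ (inferInstance : MeasurableSpace Ω))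
    (ΔW : ℕ → Ω → Fin d → ℝ)
    (Y1 Y2 : ℕ → Ω → ℝ) (Z1 Z2 : ℕ → Ω → Fin d → ℝ) (f1 f2 : ℕ → Ω → ℝ)
    (k_y L_f L_v : ℝ) (hLf : 0 ≤ L_f) (hLv : 0 ≤ L_v) (ε : ℕ → ℝ)
    (hε : ∀ n < N, 0 ≤ ε n)
    (hInc : IncrementsOK P N d h 𝒢 ΔW)
    (hSol1 : SolvesScheme P N d h 𝒢 ΔW Y1 Z1 f1)
    (hSol2 : SolvesScheme P N d h 𝒢 ΔW Y2 Z2 f2)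
    (hDrv : DriverDiff P N d 𝒢 k_y L_f L_v ε Y1 Y2 Z1 Z2 f1 f2)
    (lam : ℝ) (hlam : 0 < lam) (hlamLf : L_f ≤ lam) (hlamky : 0 ≤ 2 * k_y + lam)
    (hsmall : h * (2 * k_y + lam) < 1)
    (A : ℝ) (hA : A = (1 - h * (2 * k_y + lam))⁻¹) :
    ∀ n ≤ N,
      (∫ ω, (Y1 n ω - Y2 n ω) ^ 2 ∂P)
        ≤ A ^ N * (∫ ω, (Y1 N ω - Y2 N ω) ^ 2 ∂P)
          + N * h * L_v * lam⁻¹ * A ^ N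
            * (Finset.range N).sup'
                (nonempty_range_iff.mpr (Nat.one_le_iff_ne_zero.mp hN)) ε :=
  deltaY_bound_discrete_scheme_general P N hN h hh d 𝒢 ΔW Y1 Y2 Z1 Z2 f1 f2 k_y L_f L_v hLv ε hε
    hInc hSol1 hSol2 hDrv lam hlam hlamLf hlamky hsmall A hA

end
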